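/- arXiv:1909.00655 — 3 statements merged into one kernel-verified Lean document; each statement's English description precedes it below -/
import Mathlib

section
/- Let Γ be a group, Ω an algebraically closed field of characteristic zero, and let ρ, ρ' : Γ → GLₙ(Ω) be semisimple (completely reducible) representations. If tr ρ(γ) = tr ρ'(γ) for all γ ∈ Γ, then ρ and ρ' are conjugate by an element of GLₙ(Ω). -/
/-!
Both representations make `Ωⁿ` a finite-dimensional semisimple module over `A = Ω[Γ]`, and the
hypothesis says that the two modules have the same character `a ↦ tr (a | M)` on all of `A`.
If a simple submodule `S` of `M` had no isomorphic copy in `N`, then the projection of `M × N`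
onto its `S`-isotypic component along the other isotypic components commutes with every
endomorphism, so by the Jacobson density theorem it is the action of some `a ∈ A`. This `a`
acts on `N` by `0` and on `M` by a nonzero idempotent, whose trace is its rank, nonzero in
characteristic zero: the characters differ. Hence `S` also occurs in `N`; splitting it off on
both sides and inducting on the dimension gives `M ≅ N`, which is the conjugacy of `ρ` and `ρ'`.
-/

/-- The representation of `Γ` on `Fin n → Ω` associated to a homomorphism `Γ →* GLₙ(Ω)`. -/
noncomputable def glRep {Ω : Type*} [CommRing Ω] {Γ : Type*} [Group Γ] {n : ℕ}
    (ρ : Γ →* GL (Fin n) Ω) : Representation Ω Γ (Fin n → Ω) :=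
  (Matrix.toLinAlgEquiv' :
        Matrix (Fin n) (Fin n) Ω ≃ₐ[Ω] ((Fin n → Ω) →ₗ[Ω] (Fin n → Ω))).toAlgHom.toRingHom.toMonoidHom.comp
    ((Units.coeHom (Matrix (Fin n) (Fin n) Ω)).comp ρ)

open LinearMap Module

section Semisimple

variable {R M : Type*} [Ring R] [AddCommGroup M] [Module R M]

instance IsSemisimpleModule.prod {N : Type*} [AddCommGroup N] [Module R N]
    [IsSemisimpleModule R M] [IsSemisimpleModule R N] : IsSemisimpleModule R (M × N) :=
  have := (IsSemisimpleModule.range (inl R M N)).sup (IsSemisimpleModule.range (inr R M N))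
  .congr ((LinearEquiv.ofEq _ _ sup_range_inl_inr).trans Submodule.topEquiv).symm

theorem isotypicComponent_eq_bot_of_isEmpty {S : Type*} [AddCommGroup S] [Module R S]
    [IsSimpleModule R S] (h : ∀ T : Submodule R M, IsSimpleModule R T → IsEmpty (T ≃ₗ[R] S)) :
    isotypicComponent R M S = ⊥ :=
  sSup_eq_bot.mpr fun T ⟨e⟩ => ((h T (.congr e)).false e).elim

theorem Submodule.commute_projection_of_isFullyInvariant {p q : Submodule R M} (h : IsCompl p q)
    (hp : p.IsFullyInvariant) (hq : q.IsFullyInvariant) (f : Module.End R M) :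
    Commute (p.projection q h) f := by
  rw [(isIdempotentElem_projection h).commute_iff, range_projection, ker_projection,
    Module.End.mem_invtSubmodule, Module.End.mem_invtSubmodule]
  exact ⟨hp f, hq f⟩

theorem exists_isFullyInvariant_isCompl_isotypicComponent [IsSemisimpleModule R M]
    (S : Submodule R M) [IsSimpleModule R S] :
    ∃ q : Submodule R M, IsCompl (isotypicComponent R M S) q ∧ q.IsFullyInvariant := by
  have hS : isotypicComponent R M S ∈ isotypicComponents R M := ⟨S, inferInstance, rfl⟩
  set others := isotypicComponents R M \ {isotypicComponent R M S}
  refine ⟨sSup others, ⟨?_, ?_⟩,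
    isFullyInvariant_iff_sSup_isotypicComponents.mpr ⟨others, Set.sdiff_subset, rfl⟩⟩
  · exact (sSupIndep_isotypicComponents R M).disjoint_sSup hS Set.sdiff_subset (by simp [others])
  · rw [codisjoint_iff, ← sSup_insert, Set.insert_sdiff_singleton, Set.insert_eq_of_mem hS,
      sSup_isotypicComponents]

end Semisimple

section Density

variable {A M : Type*} [Ring A] [AddCommGroup M] [Module A M] [IsSemisimpleModule A M]
  [Module.Finite (Module.End A M) M]

theorem exists_smul_eq_of_forall_commute (f : Module.End A M) (hf : ∀ g, Commute f g) :
    ∃ a : A, ∀ x, a • x = f x := by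
  let F : Module.End (Module.End A M) M :=
    { toFun := f
      map_add' := f.map_add
      map_smul' g x := LinearMap.congr_fun (hf g).eq x }
  obtain ⟨a, ha⟩ := Module.Finite.toModuleEnd_moduleEnd_surjective F
  exact ⟨a, fun x => LinearMap.congr_fun ha x⟩

theorem exists_projection_onto_isotypicComponent (S : Submodule A M) [IsSimpleModule A S] :
    ∃ a : A, (∀ x, a • x ∈ isotypicComponent A M S) ∧
      ∀ x ∈ isotypicComponent A M S, a • x = x := by
  obtain ⟨q, hcompl, hq⟩ := exists_isFullyInvariant_isCompl_isotypicComponent S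
  obtain ⟨a, ha⟩ := exists_smul_eq_of_forall_commute _ <|
    Submodule.commute_projection_of_isFullyInvariant hcompl (.isotypicComponent A M S) hq
  refine ⟨a, fun x => ?_, fun x hx => ?_⟩
  · rw [ha]
    exact Submodule.projection_apply_mem hcompl x
  · rw [ha]
    exact Submodule.projection_apply_of_mem_left hcompl hx

end Density

section Character

variable {k A M N : Type*} [Field k] [Ring A] [Algebra k A]
  [AddCommGroup M] [Module k M] [Module A M] [IsScalarTower k A M]
  [AddCommGroup N] [Module k N] [Module A N] [IsScalarTower k A N]

instance Submodule.finite_of_isScalarTower [Module.Finite k M] (S : Submodule A M) :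
    Module.Finite k S :=
  inferInstanceAs (Module.Finite k (S.restrictScalars k))

variable (k A M) in
noncomputable def Module.character : A →ₗ[k] k :=
  trace k M ∘ₗ (Algebra.lsmul k k M).toLinearMap

theorem Module.character_apply (a : A) :
    character k A M a = trace k M (Algebra.lsmul k k M a) :=
  rfl

theorem LinearEquiv.character_eq (e : M ≃ₗ[A] N) : character k A M = character k A N := by
  ext a
  rw [character_apply, character_apply, ← trace_conj' _ (e.restrictScalars k)]
  congr 1
  ext x
  simp [LinearEquiv.conj_apply]

variable [Module.Finite k M] [Module.Finite k N]

theorem Module.character_prod : character k A (M × N) = character k A M + character k A N := by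
  ext a
  rw [LinearMap.add_apply, character_apply, character_apply, character_apply, ← trace_prodMap']
  rfl

theorem Module.character_one : character k A M 1 = finrank k M := by
  rw [character_apply, map_one, trace_one]

theorem Module.character_eq_add_of_isCompl {S S₂ : Submodule A M} (h : IsCompl S S₂) :
    character k A M = character k A S + character k A S₂ := by
  rw [← (S.prodEquivOfIsCompl S₂ h).character_eq, character_prod]

end Character

section BrauerNesbitt

variable {k A M N : Type*} [Field k] [CharZero k] [Ring A] [Algebra k A]
  [AddCommGroup M] [Module k M] [Module A M] [IsScalarTower k A M] [Module.Finite k M]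
  [AddCommGroup N] [Module k N] [Module A N] [IsScalarTower k A N] [Module.Finite k N]
  [IsSemisimpleModule A M] [IsSemisimpleModule A N]

theorem exists_simple_linearEquiv_of_character_eq (hχ : character k A M = character k A N)
    (S : Submodule A M) [IsSimpleModule A S] :
    ∃ T : Submodule A N, IsSimpleModule A T ∧ Nonempty (T ≃ₗ[A] S) := by
  by_contra! hS
  have : Module.Finite (Module.End A (M × N)) (M × N) := .of_restrictScalars_finite k _ _
  let eS : S ≃ₗ[A] S.map (inl A M N) := S.equivMapOfInjective _ inl_injective
  have : IsSimpleModule A (S.map (inl A M N)) := .congr eS.symm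
  obtain ⟨a, ha_mem, ha_fix⟩ := exists_projection_onto_isotypicComponent (S.map (inl A M N))
  have hN : Algebra.lsmul k k N a = 0 := by
    ext y
    have := le_comap_isotypicComponent _ (snd A M N) (ha_mem (0, y))
    rwa [isotypicComponent_eq_bot_of_isEmpty fun T hT =>
      ⟨fun e => (hS T hT).false (e.trans eS.symm)⟩] at this
  have hM_idem : IsIdempotentElem (Algebra.lsmul k k M a) :=
    LinearMap.ext fun x => congrArg Prod.fst (ha_fix _ (ha_mem (x, 0)))
  have hM : Algebra.lsmul k k M a = 0 :=
    LinearMap.IsIdempotentElem.eq_zero_of_trace_eq_zero hM_idem <| by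
      rw [← character_apply, hχ, character_apply, hN, map_zero]
  obtain ⟨x, hxS, hx⟩ := Submodule.exists_mem_ne_zero_of_ne_bot <|
    Submodule.nontrivial_iff_ne_bot.mp (IsSimpleModule.nontrivial A S)
  have hax : a • x = x := congrArg Prod.fst <|
    ha_fix (x, 0) (Submodule.le_isotypicComponent _ (Submodule.mem_map_of_mem hxS))
  exact hx (hax.symm.trans (LinearMap.congr_fun hM x))

theorem nonempty_linearEquiv_of_character_eq (hχ : character k A M = character k A N) :
    Nonempty (M ≃ₗ[A] N) := by
  induction hd : finrank k M using Nat.strong_induction_on generalizing M N with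
  | _ d IH =>
    rcases subsingleton_or_nontrivial M with hM | hM
    · have hN : finrank k N = 0 := by
        have := congr($hχ 1)
        rw [character_one, character_one, finrank_zero_of_subsingleton] at this
        exact_mod_cast this.symm
      have := Module.finrank_zero_iff.mp hN
      exact ⟨.ofSubsingleton M N⟩
    obtain ⟨S, hS⟩ := IsSemisimpleModule.exists_simple_submodule A M
    obtain ⟨T, -, ⟨eTS⟩⟩ := exists_simple_linearEquiv_of_character_eq hχ S
    obtain ⟨S₂, hS₂⟩ := exists_isCompl S
    obtain ⟨T₂, hT₂⟩ := exists_isCompl T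
    have hχ₂ : character k A S₂ = character k A T₂ := by
      refine add_left_cancel (a := character k A S) ?_
      rw [← character_eq_add_of_isCompl hS₂, eTS.symm.character_eq,
        ← character_eq_add_of_isCompl hT₂, hχ]
    have hd₂ : finrank k S₂ < d := by
      have := IsSimpleModule.nontrivial A S
      have : 0 < finrank k S := Module.finrank_pos
      rw [← hd, ← ((S.prodEquivOfIsCompl S₂ hS₂).restrictScalars k).finrank_eq, finrank_prod]
      omega
    obtain ⟨e₂⟩ := IH _ hd₂ hχ₂ rfl
    exact ⟨(S.prodEquivOfIsCompl S₂ hS₂).symm ≪≫ₗ eTS.symm.prodCongr e₂ ≪≫ₗ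
      T.prodEquivOfIsCompl T₂ hT₂⟩

end BrauerNesbitt

section Representation

variable {k G V W : Type*} [Field k] [Monoid G] [AddCommGroup V] [Module k V]
  [AddCommGroup W] [Module k W] {ρ : Representation k G V} {σ : Representation k G W}

theorem Representation.character_asModule (a : MonoidAlgebra k G) :
    Module.character k (MonoidAlgebra k G) ρ.asModule a = trace k V (ρ.asAlgebraHom a) :=
  rfl

theorem Representation.character_asModule_eq_of_trace_eq
    (h : ∀ g, trace k V (ρ g) = trace k W (σ g)) :
    Module.character k (MonoidAlgebra k G) ρ.asModule =
      Module.character k (MonoidAlgebra k G) σ.asModule :=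
  MonoidAlgebra.lhom_ext' fun g => LinearMap.ext_ring <| by
    simpa [Representation.character_asModule, Representation.asAlgebraHom_single_one] using h g

noncomputable def Representation.Equiv.ofAsModule
    (e : ρ.asModule ≃ₗ[MonoidAlgebra k G] σ.asModule) : ρ.Equiv σ :=
  .mk (e.restrictScalars k) fun g => LinearMap.ext fun v => by
    change e (ρ g v) = σ g (e v)
    have h := e.map_smul (MonoidAlgebra.single g 1) (ρ.asModuleEquiv.symm v)
    rw [ρ.single_smul, σ.single_smul, one_smul, one_smul] at h
    exact h

end Representation

section GLRep

variable {Γ Ω : Type*} [Group Γ] [Field Ω] {n : ℕ}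

theorem trace_glRep (ρ : Γ →* GL (Fin n) Ω) (γ : Γ) :
    trace Ω (Fin n → Ω) (glRep ρ γ) = Matrix.trace (ρ γ : Matrix (Fin n) (Fin n) Ω) :=
  Matrix.trace_toLin'_eq _

theorem exists_eq_conj_of_equiv_glRep {ρ ρ' : Γ →* GL (Fin n) Ω}
    (φ : (glRep ρ).Equiv (glRep ρ')) : ∃ g : GL (Fin n) Ω, ∀ γ, ρ' γ = g * ρ γ * g⁻¹ := by
  refine ⟨Matrix.GeneralLinearGroup.toLin.symm
    ((LinearMap.GeneralLinearGroup.generalLinearEquiv _ _).symm φ.toLinearEquiv), fun γ => ?_⟩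
  apply Matrix.GeneralLinearGroup.toLin.injective
  rw [map_mul, map_mul, map_inv, MulEquiv.apply_symm_apply]
  ext1
  exact (φ.conj_apply_self γ).symm

end GLRep

theorem stmt1_general {Γ : Type*} [Group Γ] {Ω : Type*} [Field Ω] [CharZero Ω]
    {n : ℕ} (ρ ρ' : Γ →* GL (Fin n) Ω)
    (hss : IsSemisimpleModule (MonoidAlgebra Ω Γ) (glRep ρ).asModule)
    (hss' : IsSemisimpleModule (MonoidAlgebra Ω Γ) (glRep ρ').asModule)
    (htr : ∀ γ : Γ,
      Matrix.trace (ρ γ : Matrix (Fin n) (Fin n) Ω) =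
        Matrix.trace (ρ' γ : Matrix (Fin n) (Fin n) Ω)) :
    ∃ g : GL (Fin n) Ω, ∀ γ : Γ, ρ' γ = g * ρ γ * g⁻¹ := by
  have hχ := Representation.character_asModule_eq_of_trace_eq (ρ := glRep ρ) (σ := glRep ρ')
    fun γ => by rw [trace_glRep, trace_glRep, htr]
  obtain ⟨e⟩ := nonempty_linearEquiv_of_character_eq hχ
  exact exists_eq_conj_of_equiv_glRep (.ofAsModule e)

/-- Two semisimple representations `ρ, ρ' : Γ → GLₙ(Ω)` over an algebraically
closed field of characteristic zero with equal traces are conjugate in `GLₙ(Ω)`. -/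
theorem stmt1 {Γ : Type*} [Group Γ] {Ω : Type*} [Field Ω] [IsAlgClosed Ω] [CharZero Ω]
    {n : ℕ} (ρ ρ' : Γ →* GL (Fin n) Ω)
    (hss : IsSemisimpleModule (MonoidAlgebra Ω Γ) (glRep ρ).asModule)
    (hss' : IsSemisimpleModule (MonoidAlgebra Ω Γ) (glRep ρ').asModule)
    (htr : ∀ γ : Γ,
      Matrix.trace (ρ γ : Matrix (Fin n) (Fin n) Ω) =
        Matrix.trace (ρ' γ : Matrix (Fin n) (Fin n) Ω)) :
    ∃ g : GL (Fin n) Ω, ∀ γ : Γ, ρ' γ = g * ρ γ * g⁻¹ :=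
  stmt1_general ρ ρ' hss hss' htr
end

section
/- Let Γ be a profinite group, ℓ a prime, and ρ : Γ → GLₙ(ℚ̄_ℓ) a continuous representation (with the ℓ-adic topology on ℚ̄_ℓ). Then tr ρ takes values in the ring of integers ℤ̄_ℓ of ℚ̄_ℓ. -/
/-!
A continuous image of the compact group `Γ` is bounded, so the powers of `A = ρ γ` are bounded
in the `L∞`-operator norm. If `A v = μ v` with `v ≠ 0`, then `‖μ‖ ^ k ‖v‖ = ‖A ^ k v‖` stays
bounded as `k → ∞`, forcing `‖μ‖ ≤ 1`. Over an algebraically closed field the trace is the sum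
of the eigenvalues, and by the ultrametric inequality a sum of elements of norm `≤ 1` has norm
`≤ 1`.
-/

open Matrix Polynomial

theorem IsUltrametricDist.norm_multiset_sum_le {M : Type*} [SeminormedAddCommGroup M]
    [IsUltrametricDist M] {s : Multiset M} {r : ℝ} (hr : 0 < r) (hs : ∀ x ∈ s, ‖x‖ ≤ r) :
    ‖s.sum‖ ≤ r := by
  have hmem := (closedBall_openAddSubgroup M hr).toAddSubgroup.multiset_sum_mem s
    fun x hx => mem_closedBall_zero_iff.mpr (hs x hx)
  exact mem_closedBall_zero_iff.mp hmem

namespace Matrix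

variable {K : Type*} [NormedField K] {n : Type*} [Fintype n] [DecidableEq n]

section LinftyOpNorm

attribute [local instance] Matrix.linftyOpNormedRing

theorem norm_le_one_of_mem_spectrum_of_norm_pow_le {A : Matrix n n K} {C : ℝ}
    (hC : ∀ k : ℕ, ‖A ^ k‖ ≤ C) {μ : K} (hμ : μ ∈ spectrum K A) : ‖μ‖ ≤ 1 := by
  rw [← spectrum_toLin', ← Module.End.hasEigenvalue_iff_mem_spectrum] at hμ
  obtain ⟨v, hv⟩ := hμ.exists_hasEigenvector
  have hv_pos : 0 < ‖v‖ := norm_pos_iff.mpr hv.2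
  have hpow_le : ∀ k : ℕ, ‖μ‖ ^ k ≤ C := fun k => by
    have hAk : A ^ k *ᵥ v = μ ^ k • v := by
      simpa [← Matrix.toLin'_pow, Matrix.toLin'_apply] using hv.pow_apply k
    have := (linfty_opNorm_mulVec (A ^ k) v).trans (mul_le_mul_of_nonneg_right (hC k) hv_pos.le)
    rw [hAk, norm_smul, norm_pow] at this
    exact le_of_mul_le_mul_right this hv_pos
  by_contra! h
  obtain ⟨k, hk⟩ := pow_unbounded_of_one_lt C h
  exact (hpow_le k).not_gt hk

theorem norm_le_one_of_mem_spectrum_of_isCompact {A : Matrix n n K} {S : Set (Matrix n n K)}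
    (hS : IsCompact S) (hAS : ∀ k : ℕ, A ^ k ∈ S) {μ : K} (hμ : μ ∈ spectrum K A) :
    ‖μ‖ ≤ 1 := by
  obtain ⟨C, hC⟩ := hS.exists_bound_of_continuousOn continuous_id.continuousOn
  exact norm_le_one_of_mem_spectrum_of_norm_pow_le (fun k => hC _ (hAS k)) hμ

end LinftyOpNorm

theorem norm_trace_le_of_forall_mem_spectrum [IsAlgClosed K] [IsUltrametricDist K]
    {A : Matrix n n K} {r : ℝ} (hr : 0 < r) (h : ∀ μ ∈ spectrum K A, ‖μ‖ ≤ r) :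
    ‖A.trace‖ ≤ r := by
  rw [trace_eq_sum_roots_charpoly]
  exact IsUltrametricDist.norm_multiset_sum_le hr fun μ hμ =>
    h μ (mem_spectrum_iff_isRoot_charpoly.mpr (isRoot_of_mem_roots hμ))

end Matrix

theorem stmt5_general {Γ : Type*} [Group Γ] [TopologicalSpace Γ]
    [CompactSpace Γ]
    {Ω : Type*} [NormedField Ω] [IsAlgClosed Ω]
    (hna : IsNonarchimedean fun x : Ω => ‖x‖)
    {n : ℕ} (ρ : Γ →* GL (Fin n) Ω)
    (hcont : Continuous fun γ : Γ => (ρ γ : Matrix (Fin n) (Fin n) Ω)) :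
    ∀ γ : Γ, ‖Matrix.trace (ρ γ : Matrix (Fin n) (Fin n) Ω)‖ ≤ 1 := by
  have := IsUltrametricDist.isUltrametricDist_of_isNonarchimedean_norm hna
  intro γ
  refine Matrix.norm_trace_le_of_forall_mem_spectrum zero_lt_one fun μ hμ => ?_
  refine Matrix.norm_le_one_of_mem_spectrum_of_isCompact (isCompact_range hcont)
    (fun k => ⟨γ ^ k, ?_⟩) hμ
  simp only [map_pow, Units.val_pow_eq_pow_val]

/-- a continuous representation `ρ : Γ → GLₙ(ℚ̄_ℓ)` of a profinite group has
traces in the valuation ring `ℤ̄_ℓ`, i.e. `‖tr ρ(γ)‖ ≤ 1` for all `γ`.  Here `ℚ̄_ℓ` is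
modelled by an algebraically closed nonarchimedean normed field `Ω` whose norm extends the
`ℓ`-adic norm on `ℚ_ℓ`, and `ℤ̄_ℓ = {x : ‖x‖ ≤ 1}` is its valuation ring. -/
theorem stmt5 {Γ : Type*} [Group Γ] [TopologicalSpace Γ] [IsTopologicalGroup Γ]
    [CompactSpace Γ] [TotallyDisconnectedSpace Γ]
    (ℓ : ℕ) [Fact ℓ.Prime] {Ω : Type*} [NormedField Ω] [IsAlgClosed Ω] [Algebra ℚ_[ℓ] Ω]
    (hext : ∀ x : ℚ_[ℓ], ‖algebraMap ℚ_[ℓ] Ω x‖ = ‖x‖)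
    (hna : IsNonarchimedean fun x : Ω => ‖x‖)
    {n : ℕ} (ρ : Γ →* GL (Fin n) Ω)
    (hcont : Continuous fun γ : Γ => (ρ γ : Matrix (Fin n) (Fin n) Ω)) :
    ∀ γ : Γ, ‖Matrix.trace (ρ γ : Matrix (Fin n) (Fin n) Ω)‖ ≤ 1 :=
  stmt5_general hna ρ hcont
end

section
/- Let w be a Coxeter element of the Weyl group of an irreducible root system of rank r, acting on the real vector space V spanned by the roots. Then 1 is not an eigenvalue of w on V; equivalently, the fixed subspace V^w is zero. -/
/-!
A simple reflection `sᵢ` moves a vector only along `αᵢ`, so a product of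
simple reflections over a list `l` moves it only inside the span of the `αⱼ` with `j ∈ l`. If
`sᵢ (s_l x) = x` with `i ∉ l`, then `x - s_l x` lies both on the line `ℝ αᵢ` and in that span, so by
linear independence it vanishes: `x` is fixed by `sᵢ` and by `s_l` separately. Hence a vector fixed
by a Coxeter element is fixed by every simple reflection, i.e. orthogonal to every simple root, and
the simple roots span `V`.
-/

open Submodule

namespace SimpleReflection

variable {V ι : Type*} [NormedAddCommGroup V] [InnerProductSpace ℝ V]
  {α : ι → V} {s : ι → Module.End ℝ V}
  (hs : ∀ (i : ι) (x : V),
    s i x = x - (2 * (inner ℝ (α i) x : ℝ) / (inner ℝ (α i) (α i) : ℝ)) • α i)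
include hs

lemma apply_sub_mem_span_singleton (i : ι) (x : V) : s i x - x ∈ ℝ ∙ α i := by
  rw [hs, sub_sub_cancel_left]
  exact neg_mem (smul_mem _ _ (mem_span_singleton_self _))

lemma inner_eq_zero_of_apply_eq_self {i : ι} (hi : α i ≠ 0) {x : V} (hx : s i x = x) :
    inner ℝ (α i) x = 0 := by
  rw [hs, sub_eq_self, smul_eq_zero, div_eq_zero_iff, mul_eq_zero] at hx
  have hii : inner ℝ (α i) (α i) ≠ 0 := inner_self_ne_zero.2 hi
  simpa [hi, hii] using hx

lemma list_prod_apply_sub_mem_span (l : List ι) (x : V) :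
    (l.map s).prod x - x ∈ span ℝ (α '' {i | i ∈ l}) := by
  induction l with
  | nil => simp
  | cons i t ih =>
    set y := (t.map s).prod x
    have hsplit : ((i :: t).map s).prod x - x = (s i y - y) + (y - x) := by
      simp only [List.map_cons, List.prod_cons, Module.End.mul_apply, y]
      abel
    have hi : ℝ ∙ α i ≤ span ℝ (α '' {j | j ∈ i :: t}) :=
      (span_singleton_le_iff_mem _ _).2 (subset_span ⟨i, List.mem_cons_self, rfl⟩)
    have ht : span ℝ (α '' {j | j ∈ t}) ≤ span ℝ (α '' {j | j ∈ i :: t}) :=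
      span_mono (Set.image_mono fun j hj => List.mem_cons_of_mem i hj)
    rw [hsplit]
    exact add_mem (hi (apply_sub_mem_span_singleton hs i y)) (ht ih)

lemma inner_eq_zero_of_list_prod_apply_eq_self (hli : LinearIndependent ℝ α) {l : List ι}
    (hl : l.Nodup) {x : V} (hx : (l.map s).prod x = x) : ∀ i ∈ l, inner ℝ (α i) x = 0 := by
  induction l with
  | nil => simp
  | cons i t ih =>
    obtain ⟨hit, ht⟩ := List.nodup_cons.1 hl
    set y := (t.map s).prod x
    have hxy : s i y = x := hx
    have hdisj : Disjoint (ℝ ∙ α i) (span ℝ (α '' {j | j ∈ t})) := by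
      rw [← Set.image_singleton]
      exact hli.disjoint_span_image (by simpa using hit)
    have hyx : y = x := by
      rw [← sub_eq_zero]
      refine disjoint_def.1 hdisj _ ?_ (list_prod_apply_sub_mem_span hs t x)
      rw [← neg_sub, ← hxy]
      exact neg_mem (apply_sub_mem_span_singleton hs i y)
    rw [hyx] at hxy
    exact List.forall_mem_cons.2
      ⟨inner_eq_zero_of_apply_eq_self hs (hli.ne_zero i) hxy, ih ht hyx⟩

end SimpleReflection

theorem stmt17_general {V : Type*} [NormedAddCommGroup V] [InnerProductSpace ℝ V] {r : ℕ}
    (α : Fin r → V) (hli : LinearIndependent ℝ α)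
    (hspan : Submodule.span ℝ (Set.range α) = ⊤)
    (s : Fin r → Module.End ℝ V)
    (hs : ∀ (i : Fin r) (x : V),
      s i x = x - (2 * (inner ℝ (α i) x : ℝ) / (inner ℝ (α i) (α i) : ℝ)) • α i)
    (w : Module.End ℝ V) (hw : w = (List.ofFn s).prod) :
    ∀ v : V, w v = v → v = 0 := by
  intro v hv
  rw [hw, List.ofFn_eq_map] at hv
  have horth : ∀ i, inner ℝ (α i) v = 0 := fun i =>
    SimpleReflection.inner_eq_zero_of_list_prod_apply_eq_self hs hli (List.nodup_finRange r) hv i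
      (List.mem_finRange i)
  refine InnerProductSpace.ext_inner_left_basis (Module.Basis.mk hli hspan.ge) fun i => ?_
  rw [Module.Basis.mk_apply, horth i, inner_zero_right]

/-- let `V` be the real reflection representation spanned by an irreducible
root system with root basis `α₁, …, α_r` (a linearly independent spanning family, no two-block
orthogonal decomposition), with simple reflections `s i : x ↦ x - 2⟪αᵢ,x⟫/⟪αᵢ,αᵢ⟫ · αᵢ`,
and let `w = s₁ ⋯ s_r` be the corresponding Coxeter element.  Then `1` is not an eigenvalue
of `w` on `V`: the fixed subspace `V^w` is zero. -/
theorem stmt17 {V : Type*} [NormedAddCommGroup V] [InnerProductSpace ℝ V] {r : ℕ}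
    (α : Fin r → V) (hne : ∀ i, α i ≠ 0) (hli : LinearIndependent ℝ α)
    (hspan : Submodule.span ℝ (Set.range α) = ⊤)
    (hirr : ∀ P : Finset (Fin r),
      (∀ i ∈ P, ∀ j ∉ P, (inner ℝ (α i) (α j) : ℝ) = 0) → P = ∅ ∨ P = Finset.univ)
    (s : Fin r → Module.End ℝ V)
    (hs : ∀ (i : Fin r) (x : V),
      s i x = x - (2 * (inner ℝ (α i) x : ℝ) / (inner ℝ (α i) (α i) : ℝ)) • α i)
    (w : Module.End ℝ V) (hw : w = (List.ofFn s).prod) :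
    ∀ v : V, w v = v → v = 0 :=
  stmt17_general α hli hspan s hs w hw
end
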